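/- arXiv:2401.11917 — 4 statements merged into one kernel-verified Lean document; each statement's English description precedes it below -/
import Mathlib

section
/- Let Φ⁰ : C⁰ → ℂ[[z]] × ℂ[[z]] be the ℂ-linear map f ↦ (f(0), f(1)) (evaluations of the polynomial f at v = 0 and v = 1, which lie in P = ℂ[[z]]), and let Φ¹ : C¹ → ℂ((z)) be F ↦ ∫₀¹F. Let δ : ℂ[[z]] × ℂ[[z]] → ℂ((z)) be δ(g,h) = h − g (the Čech differential of the two-disc cover of the formal raviolo). Then (Φ⁰, Φ¹) is a quasi-isomorphism of two-term complexes from (C⁰ →d C¹) to (ℂ[[z]] × ℂ[[z]] →δ ℂ((z))): one has Φ¹(d f) = δ(Φ⁰ f) for all f ∈ C⁰; Φ⁰ restricts to a ℂ-linear bijection from ker d onto ker δ; and Φ¹ induces a ℂ-linear bijection C¹/d(C⁰) → ℂ((z))/δ(ℂ[[z]] × ℂ[[z]]). (This realizes the identification of ℂ{{z}} with the derived global sections RΓ(Rav, O) of the structure sheaf of the formal raviolo, computed by the Čech complex of its cover by two formal discs.) -/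
/-!
Over a field of characteristic zero every polynomial `F` has a unique antiderivative `∫F` with
zero constant term, and `∫₀¹ F = (∫F)(1)`. Hence `∫₀¹ f′ = f(1) - f(0)`; the kernel of `d`
consists of the constants, which `Φ⁰` sends onto the diagonal `ker δ`; and `F - G = f′` with
`f(0) = g`, `f(1) = h` is solved by `f = ∫(F - G) + g` exactly when `∫₀¹ (F - G) = h - g`.
Surjectivity on `H¹` already holds with constant `F`.
-/

noncomputable section

open Polynomial

/-- Membership in `ℂ[[z]] ⊆ ℂ((z))`: all coefficients in strictly negative degrees vanish. -/
def inP (x : LaurentSeries ℂ) : Prop := ∀ n : ℤ, n < 0 → x.coeff n = 0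

/-- `∫₀¹ F` for a polynomial `F = Σ_k F_k v^k` with Laurent series coefficients:
`Σ_k F_k / (k+1)`. -/
def intg (F : Polynomial (LaurentSeries ℂ)) : LaurentSeries ℂ :=
  ∑ k ∈ Finset.range (F.natDegree + 1), F.coeff k / ((k : LaurentSeries ℂ) + 1)

namespace Polynomial

variable {K : Type*} [Field K]

def antideriv (H : K[X]) : K[X] :=
  ∑ k ∈ Finset.range (H.natDegree + 1), monomial (k + 1) (H.coeff k / (k + 1))

theorem coeff_zero_antideriv (H : K[X]) : (antideriv H).coeff 0 = 0 := by
  simp [antideriv, coeff_monomial]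

variable [CharZero K]

theorem derivative_antideriv (H : K[X]) : derivative (antideriv H) = H := by
  conv_rhs => rw [H.as_sum_range' (H.natDegree + 1) (Nat.lt_succ_self _)]
  rw [antideriv, derivative_sum]
  refine Finset.sum_congr rfl fun k _ => ?_
  rw [derivative_monomial, Nat.add_sub_cancel, Nat.cast_add_one,
    div_mul_cancel₀ _ (Nat.cast_add_one_ne_zero k)]

theorem eq_of_derivative_eq {f g : K[X]} (hd : derivative f = derivative g)
    (h0 : f.coeff 0 = g.coeff 0) : f = g := by
  have hc := eq_C_of_derivative_eq_zero (p := f - g) (by rw [derivative_sub, hd, sub_self])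
  rwa [coeff_sub, h0, sub_self, C_0, sub_eq_zero] at hc

theorem antideriv_derivative (f : K[X]) : antideriv (derivative f) = f - C (f.coeff 0) :=
  eq_of_derivative_eq (by rw [derivative_antideriv, derivative_sub, derivative_C, sub_zero])
    (by rw [coeff_zero_antideriv, coeff_sub, coeff_C_zero, sub_self])

theorem antideriv_sub (F G : K[X]) : antideriv (F - G) = antideriv F - antideriv G :=
  eq_of_derivative_eq (by simp only [derivative_antideriv, derivative_sub])
    (by simp only [coeff_sub, coeff_zero_antideriv, sub_self])

end Polynomial

instance {K : Type*} [Field K] [CharZero K] : CharZero (LaurentSeries K) :=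
  charZero_of_injective_algebraMap (algebraMap K _).injective

local notation "L" => LaurentSeries ℂ

theorem intg_eq_eval_one_antideriv (F : L[X]) : intg F = (antideriv F).eval 1 := by
  simp [intg, antideriv, eval_finsetSum]

theorem intg_derivative (f : L[X]) : intg (derivative f) = f.eval 1 - f.eval 0 := by
  rw [intg_eq_eval_one_antideriv, antideriv_derivative, eval_sub, eval_C,
    coeff_zero_eq_eval_zero]

theorem intg_sub (F G : L[X]) : intg (F - G) = intg F - intg G := by
  simp only [intg_eq_eval_one_antideriv, antideriv_sub, eval_sub]

theorem exists_derivative_eq_eval_zero_eval_one (F : L[X]) (g : L) :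
    ∃ f : L[X], derivative f = F ∧ f.eval 0 = g ∧ f.eval 1 = g + intg F := by
  refine ⟨antideriv F + C g, ?_, ?_, ?_⟩
  · rw [derivative_add, derivative_antideriv, derivative_C, add_zero]
  · rw [eval_add, ← coeff_zero_eq_eval_zero, coeff_zero_antideriv, eval_C, zero_add]
  · rw [eval_add, ← intg_eq_eval_one_antideriv, eval_C, add_comm]

theorem intg_C (y : L) : intg (C y) = y := by
  simp [intg]

/-- The pair `(Φ⁰, Φ¹)`, with `Φ⁰ f = (f(0), f(1))` and `Φ¹ F = ∫₀¹ F`, is a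
quasi-isomorphism of two-term complexes from `(C⁰ →d C¹)` to
`(ℂ[[z]] × ℂ[[z]] →δ ℂ((z)))` where `δ(g,h) = h - g`:
it is a cochain map, `Φ⁰` restricts to a bijection `ker d → ker δ`, and `Φ¹` induces
a bijection `C¹/d(C⁰) → ℂ((z))/δ(ℂ[[z]] × ℂ[[z]])`. -/
theorem raviolo_cech_quasiIso :
    -- (a) cochain map: Φ¹(d f) = δ(Φ⁰ f) for f ∈ C⁰
    (∀ f : Polynomial (LaurentSeries ℂ), inP (f.eval 0) → inP (f.eval 1) →
        intg (derivative f) = f.eval 1 - f.eval 0)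
    -- (b) Φ⁰ restricts to a bijection from ker d ⊆ C⁰ onto ker δ: injectivity …
    ∧ (∀ f g : Polynomial (LaurentSeries ℂ),
        inP (f.eval 0) → inP (f.eval 1) → derivative f = 0 →
        inP (g.eval 0) → inP (g.eval 1) → derivative g = 0 →
        f.eval 0 = g.eval 0 → f.eval 1 = g.eval 1 → f = g)
    -- … and surjectivity onto ker δ = {(g,h) : h - g = 0}
    ∧ (∀ g h : LaurentSeries ℂ, inP g → inP h → h - g = 0 →
        ∃ f : Polynomial (LaurentSeries ℂ), inP (f.eval 0) ∧ inP (f.eval 1) ∧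
          derivative f = 0 ∧ f.eval 0 = g ∧ f.eval 1 = h)
    -- (c) Φ¹ induces a bijection C¹/d(C⁰) → ℂ((z))/δ(ℂ[[z]]×ℂ[[z]]): well-definedness
    -- and injectivity of the induced map …
    ∧ (∀ F G : Polynomial (LaurentSeries ℂ),
        (∃ g h : LaurentSeries ℂ, inP g ∧ inP h ∧ intg F - intg G = h - g) ↔
        (∃ f : Polynomial (LaurentSeries ℂ), inP (f.eval 0) ∧ inP (f.eval 1) ∧
          F - G = derivative f))
    -- … and surjectivity of the induced map
    ∧ (∀ y : LaurentSeries ℂ, ∃ (F : Polynomial (LaurentSeries ℂ)) (g h : LaurentSeries ℂ),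
        inP g ∧ inP h ∧ y = intg F + (h - g)) := by
  refine ⟨fun f _ _ => intg_derivative f, ?_, ?_, fun F G => ⟨?_, ?_⟩, ?_⟩
  · intro f g _ _ hf _ _ hg h0 _
    exact eq_of_derivative_eq (hf.trans hg.symm)
      (by rwa [coeff_zero_eq_eval_zero, coeff_zero_eq_eval_zero])
  · intro g h hg _ hgh
    rw [sub_eq_zero.1 hgh]
    exact ⟨C g, by simpa using hg, by simpa using hg, derivative_C, by simp, by simp⟩
  · rintro ⟨g, h, hg, hh, hgh⟩
    obtain ⟨f, hf, h0, h1⟩ := exists_derivative_eq_eval_zero_eval_one (F - G) g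
    rw [intg_sub, hgh, add_sub_cancel] at h1
    exact ⟨f, h0 ▸ hg, h1 ▸ hh, hf.symm⟩
  · rintro ⟨f, h0, h1, hf⟩
    exact ⟨f.eval 0, f.eval 1, h0, h1, by rw [← intg_sub, hf, intg_derivative]⟩
  · exact fun y =>
      ⟨C y, 0, 0, fun _ _ => rfl, fun _ _ => rfl, by rw [intg_C, sub_self, add_zero]⟩

end
end

section
/- An element f ∈ C⁰ satisfies d f = 0 if and only if f is a constant polynomial in v whose value lies in ℂ[[z]]. Consequently the ℂ-linear map ℂ[[z]] → ker(d : C⁰ → C¹) sending a power series g to the constant polynomial g is a bijection; that is, H⁰(ℂ{{z}}) ≅ ℂ[[z]] as ℂ-vector spaces. -/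
/-!
In characteristic zero a polynomial with vanishing derivative is constant, hence equal to the
constant polynomial at its value at any point. So the kernel of `d` consists of constants, and
for a constant the conditions `f(0) ∈ ℂ[[z]]` and `f(1) ∈ ℂ[[z]]` both say that its value is a
power series.
-/

noncomputable section

open Polynomial

instance HahnSeries.instCharZero {Γ R : Type*} [PartialOrder Γ] [AddCommMonoid Γ]
    [IsOrderedCancelAddMonoid Γ] [Semiring R] [CharZero R] : CharZero (HahnSeries Γ R) :=
  charZero_of_injective_ringHom HahnSeries.C_injective

namespace Polynomial

variable {R : Type*} [Semiring R] [IsAddTorsionFree R]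

theorem derivative_eq_zero_iff_eq_C_eval {p : R[X]} (a : R) :
    derivative p = 0 ↔ p = C (p.eval a) := by
  refine ⟨fun h => ?_, fun h => h ▸ derivative_C⟩
  rw [eq_C_of_derivative_eq_zero h, eval_C]

theorem derivative_eq_zero_iff_exists_eq_C {P : R → Prop} {p : R[X]} {a : R}
    (ha : P (p.eval a)) : derivative p = 0 ↔ ∃ g, P g ∧ p = C g := by
  rw [derivative_eq_zero_iff_eq_C_eval a]
  refine ⟨fun h => ⟨_, ha, h⟩, ?_⟩
  rintro ⟨g, -, rfl⟩
  rw [eval_C]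

theorem bijective_C_ker_derivative (P : R → Prop) (a b : R) :
    Function.Bijective (fun g : {g // P g} =>
      (⟨C g.1, ⟨⟨by simpa using g.2, by simpa using g.2⟩, derivative_C⟩⟩ :
        {f : R[X] // (P (f.eval a) ∧ P (f.eval b)) ∧ derivative f = 0})) := by
  refine ⟨fun g g' h => Subtype.ext (C_injective (congrArg Subtype.val h)), ?_⟩
  rintro ⟨f, ⟨ha, -⟩, hf⟩
  exact ⟨⟨f.eval a, ha⟩, Subtype.ext ((derivative_eq_zero_iff_eq_C_eval a).1 hf).symm⟩

end Polynomial

/-- An element `f ∈ C⁰` satisfies `d f = 0` iff `f` is a constant polynomial whose value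
lies in `ℂ[[z]]`; consequently the map `ℂ[[z]] → ker (d : C⁰ → C¹)`, `g ↦ C g`, is a
bijection, i.e. `H⁰(ℂ{{z}}) ≅ ℂ[[z]]`. -/
theorem raviolo_H0 :
    (∀ f : Polynomial (LaurentSeries ℂ), inP (f.eval 0) → inP (f.eval 1) →
      (derivative f = 0 ↔ ∃ g : LaurentSeries ℂ, inP g ∧ f = C g))
    ∧ Function.Bijective
        (fun g : {g : LaurentSeries ℂ // inP g} =>
          (⟨C g.1, ⟨⟨by simpa using g.2, by simpa using g.2⟩, by simp⟩⟩ :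
            {f : Polynomial (LaurentSeries ℂ) //
              (inP (f.eval 0) ∧ inP (f.eval 1)) ∧ derivative f = 0})) :=
  ⟨fun _ h0 _ => derivative_eq_zero_iff_exists_eq_C h0, bijective_C_ker_derivative inP 0 1⟩

end
end

section
/- Every f ∈ C⁰ can be written uniquely as f = f₋ + f₊ where f₊ ∈ P[v] (all coefficients of f₊ are power series) and f₋ ∈ Q[v] with f₋(0) = 0 and f₋(1) = 0 (all coefficients of f₋ are supported in strictly negative powers of z and the evaluations of f₋ at v = 0 and v = 1 vanish). Together with the coefficientwise Laurent splitting in degree one, this gives the decomposition of dg vector spaces ℂ{{z}} = ℂ{{z}}₋ ⊕ ℂ{{z}}₊. -/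
/-!
The splitting is coefficientwise truncation: `f₋` keeps the strictly negative powers of `z` in
every coefficient of `f`. Truncation is additive and commutes with multiplication by `0` and
by `1`, hence with evaluation at `v = 0` and `v = 1`; so `f₋(0)` and `f₋(1)` are the truncations
of the power series `f(0)` and `f(1)`, which vanish. Uniqueness already holds coefficientwise,
since `ℂ[[z]] ∩ z⁻¹ℂ[z⁻¹] = 0`.
-/

noncomputable section

open Polynomial

/-- Membership in `z⁻¹ℂ[z⁻¹] ⊆ ℂ((z))`. -/
def inQ (x : LaurentSeries ℂ) : Prop := ∀ n : ℤ, 0 ≤ n → x.coeff n = 0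

namespace Polynomial

variable {R S F : Type*} [Semiring R] [Semiring S] [FunLike F R S] [ZeroHomClass F R S]

def mapCoeffs (T : F) (f : R[X]) : S[X] :=
  ⟨AddMonoidAlgebra.ofCoeff (f.toFinsupp.coeff.mapRange T (map_zero T))⟩

@[simp]
theorem coeff_mapCoeffs (T : F) (f : R[X]) (k : ℕ) : (f.mapCoeffs T).coeff k = T (f.coeff k) :=
  rfl

theorem natDegree_mapCoeffs_le (T : F) (f : R[X]) : (f.mapCoeffs T).natDegree ≤ f.natDegree :=
  natDegree_le_iff_coeff_eq_zero.2 fun _ hk => by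
    rw [coeff_mapCoeffs, coeff_eq_zero_of_natDegree_lt hk, map_zero]

theorem eval_mapCoeffs {G : Type*} [FunLike G R R] [AddMonoidHomClass G R R] (T : G) {x : R}
    (hT : ∀ a, T (a * x) = T a * x) (f : R[X]) : (f.mapCoeffs T).eval x = T (f.eval x) := by
  have hpow (a : R) (i : ℕ) : T (a * x ^ i) = T a * x ^ i := by
    induction i with
    | zero => simp
    | succ i ih => rw [pow_succ, ← mul_assoc, hT, ih, mul_assoc]
  have hdeg : (f.mapCoeffs T).natDegree < f.natDegree + 1 :=
    Nat.lt_succ_of_le (natDegree_mapCoeffs_le T f)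
  simp only [eval_eq_sum_range' hdeg, eval_eq_sum_range, map_sum, coeff_mapCoeffs, hpow]

end Polynomial

open HahnSeries

theorem inQ_truncLT (x : LaurentSeries ℂ) : inQ (truncLT 0 x) :=
  fun _ hn => coeff_truncLT_of_le hn x

theorem inP_sub_truncLT (x : LaurentSeries ℂ) : inP (x - truncLT 0 x) :=
  fun _ hn => by rw [HahnSeries.coeff_sub, coeff_truncLT_of_lt hn, sub_self]

theorem truncLT_eq_zero_of_inP {x : LaurentSeries ℂ} (hx : inP x) : truncLT 0 x = 0 := by
  ext n
  rw [HahnSeries.coeff_truncLT]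
  split_ifs with hn
  exacts [hx n hn, rfl]

theorem truncLT_add_eq_of_inQ_of_inP {a b : LaurentSeries ℂ} (ha : inQ a) (hb : inP b) :
    truncLT 0 (a + b) = a := by
  ext n
  rw [HahnSeries.coeff_truncLT, HahnSeries.coeff_add]
  split_ifs with hn
  · rw [hb n hn, add_zero]
  · exact (ha n (not_lt.1 hn)).symm

def principalPart (f : (LaurentSeries ℂ)[X]) : (LaurentSeries ℂ)[X] :=
  f.mapCoeffs (truncLTLinearMap ℂ (0 : ℤ) (V := ℂ))

theorem coeff_principalPart (f : (LaurentSeries ℂ)[X]) (k : ℕ) :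
    (principalPart f).coeff k = truncLT 0 (f.coeff k) :=
  rfl

theorem eval_principalPart_eq_zero {f : (LaurentSeries ℂ)[X]} {x : LaurentSeries ℂ}
    (hx : x = 0 ∨ x = 1) (hf : inP (f.eval x)) : (principalPart f).eval x = 0 := by
  have hT (a : LaurentSeries ℂ) : truncLT 0 (a * x) = truncLT 0 a * x := by
    rcases hx with rfl | rfl <;> simp
  rw [principalPart, eval_mapCoeffs (truncLTLinearMap ℂ (0 : ℤ) (V := ℂ)) hT]
  exact truncLT_eq_zero_of_inP hf

def IsLaurentSplitting (F : (LaurentSeries ℂ)[X])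
    (p : (LaurentSeries ℂ)[X] × (LaurentSeries ℂ)[X]) : Prop :=
  F = p.1 + p.2 ∧ (∀ k, inQ (p.1.coeff k)) ∧ (∀ k, inP (p.2.coeff k))

theorem isLaurentSplitting_principalPart (F : (LaurentSeries ℂ)[X]) :
    IsLaurentSplitting F (principalPart F, F - principalPart F) :=
  ⟨(add_sub_cancel (principalPart F) F).symm, fun _ => inQ_truncLT _,
    fun k => inP_sub_truncLT (F.coeff k)⟩

theorem IsLaurentSplitting.eq_principalPart {F : (LaurentSeries ℂ)[X]}
    {p : (LaurentSeries ℂ)[X] × (LaurentSeries ℂ)[X]} (hp : IsLaurentSplitting F p) :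
    p = (principalPart F, F - principalPart F) := by
  obtain ⟨a, b⟩ := p
  obtain ⟨rfl, ha, hb⟩ := hp
  dsimp only at ha hb ⊢
  have hprincipal : principalPart (a + b) = a := by
    ext1 k
    rw [coeff_principalPart, Polynomial.coeff_add, truncLT_add_eq_of_inQ_of_inP (ha k) (hb k)]
  rw [hprincipal]
  exact Prod.ext rfl (add_sub_cancel_left a b).symm

/-- Unique decomposition `ℂ{{z}} = ℂ{{z}}₋ ⊕ ℂ{{z}}₊` in degrees zero and one. -/
theorem raviolo_splitting :
    -- degree 0: every f ∈ C⁰ is uniquely f₋ + f₊ with f₊ ∈ P[v] and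
    -- f₋ ∈ Q[v], f₋(0) = f₋(1) = 0
    (∀ f : Polynomial (LaurentSeries ℂ), inP (f.eval 0) → inP (f.eval 1) →
      ∃! p : Polynomial (LaurentSeries ℂ) × Polynomial (LaurentSeries ℂ),
        f = p.1 + p.2 ∧ (∀ k, inQ (p.1.coeff k)) ∧ p.1.eval 0 = 0 ∧ p.1.eval 1 = 0 ∧
          (∀ k, inP (p.2.coeff k)))
    -- degree 1: coefficientwise Laurent splitting
    ∧ (∀ F : Polynomial (LaurentSeries ℂ),
        ∃! p : Polynomial (LaurentSeries ℂ) × Polynomial (LaurentSeries ℂ),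
          F = p.1 + p.2 ∧ (∀ k, inQ (p.1.coeff k)) ∧ (∀ k, inP (p.2.coeff k))) := by
  refine ⟨fun f h0 h1 => ?_, fun F => ⟨_, isLaurentSplitting_principalPart F,
    fun _ => IsLaurentSplitting.eq_principalPart⟩⟩
  obtain ⟨hsum, hQ, hP⟩ := isLaurentSplitting_principalPart f
  refine ⟨_, ⟨hsum, hQ, eval_principalPart_eq_zero (.inl rfl) h0,
    eval_principalPart_eq_zero (.inr rfl) h1, hP⟩, ?_⟩
  rintro p ⟨hsum', hQ', -, -, hP'⟩
  exact IsLaurentSplitting.eq_principalPart ⟨hsum', hQ', hP'⟩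

end
end

section
/- For every σ ∈ S_N one has P_s(Σ_{τ ∈ π_N^{-1}(σ)} u_τ) = u_σ. In particular P_s(Σ_{τ ∈ S_{N+1}} u_τ) = Σ_{σ ∈ S_N} u_σ, so P_s descends to a map between the coordinate rings of the algebro-geometric simplices Δ¹ × Δ^{N!−1} and Δ^{(N+1)!−1}, and is a left inverse on generators of the map u_σ ↦ Σ_{τ ∈ π_N^{-1}(σ)} u_τ. -/
/-!
The fibre of `π_N` over `σ` consists of the `N + 1` orders obtained by inserting `N + 1` into
`σ` at some position `j`. Only two of them survive `P_s`: `j` just before `s`, contributing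
`(1 - v) u_σ`, and `j` just after `s`, contributing `v u_σ`. Summing over all `σ` gives the
statement for the full sum, since the fibres partition `S_{N+1}`.
-/

noncomputable section

open scoped Classical

/-- Total orders on `{1,…,n}` are identified with bijections `τ : Fin n ≃ Fin n`,
`τ k` being the `k`-th smallest element. -/
abbrev TotalOrd (n : ℕ) := Equiv.Perm (Fin n)

/-- `a` immediately precedes `b` in `τ`: they occupy consecutive positions `k, k+1`. -/
def immPrec {n : ℕ} (τ : TotalOrd (n + 1)) (a b : Fin (n + 1)) : Prop :=
  ∃ k : Fin n, τ k.castSucc = a ∧ τ k.succ = b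

/-- `π_N : S_{N+1} → S_N`: delete the entry `N+1`, i.e. list the elements of `{1,…,N}` in
the order in which they occur in `τ` (obtained by sorting `Fin N` by position in `τ`). -/
def delLast {N : ℕ} (τ : TotalOrd (N + 1)) : TotalOrd N :=
  Tuple.sort (fun a : Fin N => τ.symm a.castSucc)

/-- The algebra map `P_s : ℂ[u_τ : τ ∈ S_{N+1}] → ℂ[v][u_σ : σ ∈ S_N]` determined by
`u_τ ↦ (1-v)u_{π_N τ}` if `N+1` immediately precedes `s` in `τ`,
`u_τ ↦ v·u_{π_N τ}` if `s` immediately precedes `N+1` in `τ`, and `u_τ ↦ 0` otherwise. -/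
def Ps (N : ℕ) (s : Fin N) :
    MvPolynomial (TotalOrd (N + 1)) ℂ →ₐ[ℂ]
      Polynomial (MvPolynomial (TotalOrd N) ℂ) :=
  MvPolynomial.aeval fun τ : TotalOrd (N + 1) =>
    if immPrec τ (Fin.last N) s.castSucc then
      (1 - Polynomial.X) * Polynomial.C (MvPolynomial.X (delLast τ))
    else if immPrec τ s.castSucc (Fin.last N) then
      Polynomial.X * Polynomial.C (MvPolynomial.X (delLast τ))
    else 0

open Finset

namespace Fin

lemma val_succAbove_eq_add_one_iff {n : ℕ} (j : Fin (n + 1)) (p : Fin n) :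
    (j.succAbove p : ℕ) = j + 1 ↔ j = p.castSucc := by
  rcases lt_or_ge p.castSucc j with h | h
  · rw [succAbove_of_castSucc_lt _ _ h]
    simp only [lt_def, val_castSucc, Fin.ext_iff] at h ⊢
    omega
  · rw [succAbove_of_le_castSucc _ _ h]
    simp only [Fin.ext_iff, val_succ, val_castSucc]
    omega

lemma val_eq_succAbove_add_one_iff {n : ℕ} (j : Fin (n + 1)) (p : Fin n) :
    (j : ℕ) = j.succAbove p + 1 ↔ j = p.succ := by
  rcases lt_or_ge p.castSucc j with h | h
  · rw [succAbove_of_castSucc_lt _ _ h]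
    simp only [Fin.ext_iff, val_succ, val_castSucc]
  · rw [succAbove_of_le_castSucc _ _ h]
    simp only [le_def, val_castSucc, Fin.ext_iff, val_succ] at h ⊢
    omega

end Fin

lemma immPrec_iff {n : ℕ} (τ : TotalOrd (n + 1)) (a b : Fin (n + 1)) :
    immPrec τ a b ↔ (τ.symm b : ℕ) = τ.symm a + 1 := by
  constructor
  · rintro ⟨k, rfl, rfl⟩
    simp
  · intro h
    have hlt : (τ.symm a : ℕ) < n := by omega
    refine ⟨⟨τ.symm a, hlt⟩, ?_, ?_⟩ <;> rw [← Equiv.eq_symm_apply, Fin.ext_iff]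
    · rfl
    · exact h.symm

section insertLast

variable {N : ℕ}

/-- `σ` with `N + 1` inserted at position `j`, built through its inverse (the position map). -/
def insertLast (σ : TotalOrd N) (j : Fin (N + 1)) : TotalOrd (N + 1) :=
  ((finSuccEquiv' (Fin.last N)).trans
    ((Equiv.optionCongr σ.symm).trans (finSuccEquiv' j).symm)).symm

@[simp] lemma insertLast_symm_last (σ : TotalOrd N) (j : Fin (N + 1)) :
    (insertLast σ j).symm (Fin.last N) = j := by
  rw [insertLast, Equiv.symm_symm]
  simp only [Equiv.trans_apply, finSuccEquiv'_at, Equiv.optionCongr_apply, Option.map_none,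
    finSuccEquiv'_symm_none]

@[simp] lemma insertLast_symm_castSucc (σ : TotalOrd N) (j : Fin (N + 1)) (a : Fin N) :
    (insertLast σ j).symm a.castSucc = j.succAbove (σ.symm a) := by
  rw [insertLast, Equiv.symm_symm, ← Fin.succAbove_last_apply a]
  simp only [Equiv.trans_apply, finSuccEquiv'_succAbove, Equiv.optionCongr_apply,
    Option.map_some, finSuccEquiv'_symm_some]

@[simp] lemma delLast_insertLast (σ : TotalOrd N) (j : Fin (N + 1)) :
    delLast (insertLast σ j) = σ := by
  rw [delLast, eq_comm, Tuple.eq_sort_iff]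
  have hmono : StrictMono fun a => (insertLast σ j).symm (σ a).castSucc := by
    simpa using Fin.strictMono_succAbove j
  exact ⟨hmono.monotone, fun _ _ hlt heq => absurd (hmono.injective heq) hlt.ne⟩

lemma insertLast_injective (σ : TotalOrd N) : Function.Injective (insertLast σ) := by
  intro j j' h
  rw [← insertLast_symm_last σ j, h, insertLast_symm_last]

lemma bijective_insertLast :
    Function.Bijective fun p : TotalOrd N × Fin (N + 1) => insertLast p.1 p.2 := by
  refine (Fintype.bijective_iff_injective_and_card _).2 ⟨?_, ?_⟩
  · rintro ⟨σ, j⟩ ⟨σ', j'⟩ h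
    obtain rfl : σ = σ' := by simpa using congrArg delLast h
    exact congrArg _ (insertLast_injective σ h)
  · simp [Fintype.card_perm, Nat.factorial_succ, Nat.mul_comm]

lemma filter_delLast_eq_image (σ : TotalOrd N) :
    univ.filter (fun τ => delLast τ = σ) = univ.image (insertLast σ) := by
  ext τ
  simp only [mem_filter, mem_univ, true_and, mem_image]
  constructor
  · rintro rfl
    obtain ⟨⟨σ', j⟩, rfl⟩ := bijective_insertLast.2 τ
    exact ⟨j, by rw [delLast_insertLast]⟩
  · rintro ⟨j, rfl⟩
    exact delLast_insertLast σ j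

lemma sum_filter_delLast_eq {M : Type*} [AddCommMonoid M] (σ : TotalOrd N)
    (f : TotalOrd (N + 1) → M) :
    ∑ τ ∈ univ.filter (fun τ => delLast τ = σ), f τ = ∑ j, f (insertLast σ j) := by
  rw [filter_delLast_eq_image, sum_image fun _ _ _ _ h => insertLast_injective σ h]

lemma immPrec_insertLast_last_castSucc (σ : TotalOrd N) (j : Fin (N + 1)) (s : Fin N) :
    immPrec (insertLast σ j) (Fin.last N) s.castSucc ↔ j = (σ.symm s).castSucc := by
  simp [immPrec_iff, Fin.val_succAbove_eq_add_one_iff]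

lemma immPrec_insertLast_castSucc_last (σ : TotalOrd N) (j : Fin (N + 1)) (s : Fin N) :
    immPrec (insertLast σ j) s.castSucc (Fin.last N) ↔ j = (σ.symm s).succ := by
  simp [immPrec_iff, Fin.val_eq_succAbove_add_one_iff]

end insertLast

open Polynomial in
lemma Ps_X_insertLast (N : ℕ) (s : Fin N) (σ : TotalOrd N) (j : Fin (N + 1)) :
    Ps N s (MvPolynomial.X (insertLast σ j)) =
      (if j = (σ.symm s).castSucc then (1 - X) * C (MvPolynomial.X σ) else 0) +
        (if j = (σ.symm s).succ then X * C (MvPolynomial.X σ) else 0) := by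
  have hne : (σ.symm s).castSucc ≠ (σ.symm s).succ := Fin.castSucc_lt_succ.ne
  rw [Ps, MvPolynomial.aeval_X]
  simp only [immPrec_insertLast_last_castSucc, immPrec_insertLast_castSucc_last,
    delLast_insertLast]
  split_ifs <;> simp_all

lemma Ps_sum_fiber (N : ℕ) (s : Fin N) (σ : TotalOrd N) :
    Ps N s (∑ τ ∈ univ.filter (fun τ => delLast τ = σ), MvPolynomial.X τ) =
      Polynomial.C (MvPolynomial.X σ) := by
  rw [map_sum, sum_filter_delLast_eq]
  simp only [Ps_X_insertLast, sum_add_distrib, sum_ite_eq', mem_univ, if_true]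
  ring

/-- For every `σ ∈ S_N`, `P_s(Σ_{τ ∈ π_N⁻¹(σ)} u_τ) = u_σ`; in particular
`P_s(Σ_{τ ∈ S_{N+1}} u_τ) = Σ_{σ ∈ S_N} u_σ`, so `P_s` descends to the coordinate rings of
the algebro-geometric simplices and is a left inverse on generators of
`u_σ ↦ Σ_{τ ∈ π_N⁻¹(σ)} u_τ`. -/
theorem Ps_section (N : ℕ) (s : Fin N) :
    (∀ σ : TotalOrd N,
      Ps N s (∑ τ ∈ Finset.univ.filter (fun τ => delLast τ = σ), MvPolynomial.X τ)
        = Polynomial.C (MvPolynomial.X σ))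
    ∧ Ps N s (∑ τ : TotalOrd (N + 1), MvPolynomial.X τ)
        = ∑ σ : TotalOrd N, Polynomial.C (MvPolynomial.X σ) := by
  refine ⟨Ps_sum_fiber N s, ?_⟩
  rw [← sum_fiberwise univ delLast, map_sum]
  exact sum_congr rfl fun σ _ => Ps_sum_fiber N s σ

end
end
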